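/- (i) Every purse H satisfies ρ(H) = 3. (ii) Every 3-dicritical digraph D that contains a spanning purse as a subdigraph satisfies ρ(D) ≤ −3. -/

import Mathlib

/-!
Basic theory of finite digraphs: a digraph has a finite vertex set and a
finite set of arcs (ordered pairs of distinct vertices).
-/

/-- A finite digraph on a vertex type `V`: a finite vertex set together with a
finite set of arcs, each arc being an ordered pair of distinct vertices. -/
structure Digraph' (V : Type*) where
  verts : Finset V
  arcs : Finset (V × V)
  wf : ∀ a ∈ arcs, a.1 ∈ verts ∧ a.2 ∈ verts ∧ a.1 ≠ a.2

namespace Digraph'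

variable {V : Type*} [DecidableEq V]

/-- The number of vertices of a digraph. -/
def n (D : Digraph' V) : ℕ := D.verts.card

/-- The number of arcs of a digraph. -/
def m (D : Digraph' V) : ℕ := D.arcs.card

/-- The set of consecutive (cyclically) pairs of a list, i.e. the arcs of the
directed cycle running through the list. -/
def cyclicArcs (c : List V) : Finset (V × V) := (c.zip (c.rotate 1)).toFinset

/-- The set of consecutive pairs of a list, i.e. the arcs of the directed path
running through the list. -/
def pathArcs (p : List V) : Finset (V × V) := (p.zip p.tail).toFinset

/-- The symmetric closure of a set of arcs. -/
def symArcs (s : Finset (V × V)) : Finset (V × V) := s ∪ s.image Prod.swap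

/-- The arcs of the bidirected path running through a list (each consecutive
pair is joined by a digon). -/
def pathDigonArcs (p : List V) : Finset (V × V) := symArcs (pathArcs p)

/-- `p` is the list of vertices of a path of odd length (an odd number of edges,
equivalently an even number of vertices) from `a` to `b`. -/
def IsOddBidirPathList (p : List V) (a b : V) : Prop :=
  p.Nodup ∧ Even p.length ∧ p.head? = some a ∧ p.getLast? = some b

/-- The subdigraph induced by `S` contains no directed cycle.  A directed cycle
is given by a nonempty list of at least two distinct vertices, each one having an
arc towards the (cyclically) next one. -/
def AcyclicOn (D : Digraph' V) (S : Finset V) : Prop :=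
  ¬ ∃ c : List V, c.Nodup ∧ 2 ≤ c.length ∧ (∀ v ∈ c, v ∈ S) ∧ cyclicArcs c ⊆ D.arcs

/-- `φ` is a `k`-dicolouring of `D`: every colour class induces an acyclic
subdigraph. -/
def IsDicolouring (D : Digraph' V) (k : ℕ) (φ : V → Fin k) : Prop :=
  ∀ i : Fin k, D.AcyclicOn (D.verts.filter fun v => φ v = i)

/-- `D` admits a `k`-dicolouring. -/
def Dicolourable (D : Digraph' V) (k : ℕ) : Prop :=
  ∃ φ : V → Fin k, D.IsDicolouring k φ

/-- The dichromatic number of `D`: the least `k` such that `D` is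
`k`-dicolourable. -/
noncomputable def dichromatic (D : Digraph' V) : ℕ := sInf {k | D.Dicolourable k}

/-- `H` is a subdigraph of `D`. -/
def IsSubdigraph (H D : Digraph' V) : Prop := H.verts ⊆ D.verts ∧ H.arcs ⊆ D.arcs

/-- `H` is a proper subdigraph of `D`. -/
def IsProperSubdigraph (H D : Digraph' V) : Prop :=
  H.IsSubdigraph D ∧ (H.verts ≠ D.verts ∨ H.arcs ≠ D.arcs)

/-- `D` is `k`-dicritical: its dichromatic number is `k` and every proper
subdigraph has dichromatic number at most `k - 1`. -/
def Dicritical (k : ℕ) (D : Digraph' V) : Prop :=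
  D.dichromatic = k ∧
    ∀ H : Digraph' V, H.IsProperSubdigraph D → H.dichromatic ≤ k - 1

/-- `D` is an oriented graph: it has no digon. -/
def Oriented (D : Digraph' V) : Prop := ∀ a ∈ D.arcs, (a.2, a.1) ∉ D.arcs

/-- There is a digon between `u` and `v` in `D`. -/
def HasDigon (D : Digraph' V) (u v : V) : Prop :=
  (u, v) ∈ D.arcs ∧ (v, u) ∈ D.arcs

/-- `u` and `v` are neighbours: there is at least one arc between them. -/
def UAdj (D : Digraph' V) (u v : V) : Prop :=
  (u, v) ∈ D.arcs ∨ (v, u) ∈ D.arcs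

/-- `M` is a matching of digons of `D` (a matching of the digon graph `B(D)`):
a set of digons of `D`, pairwise sharing no end-vertex. -/
def IsDigonMatching (D : Digraph' V) (M : Finset (V × V)) : Prop :=
  (∀ p ∈ M, D.HasDigon p.1 p.2) ∧
    ∀ p ∈ M, ∀ q ∈ M, p ≠ q → p.1 ≠ q.1 ∧ p.1 ≠ q.2 ∧ p.2 ≠ q.1 ∧ p.2 ≠ q.2

/-- `π(D)`: the maximum size of a matching of the digon graph `B(D)`. -/
noncomputable def piNum (D : Digraph' V) : ℕ :=
  sSup {k | ∃ M : Finset (V × V), D.IsDigonMatching M ∧ M.card = k}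

/-- The potential `ρ(D) = 7 n(D) - 3 m(D) - 2 π(D)`. -/
noncomputable def potential (D : Digraph' V) : ℤ :=
  7 * (D.n : ℤ) - 3 * (D.m : ℤ) - 2 * (D.piNum : ℤ)

/-- The subdigraph of `D` induced by `R`. -/
def induce (D : Digraph' V) (R : Finset V) : Digraph' V where
  verts := D.verts ∩ R
  arcs := D.arcs.filter fun a => a.1 ∈ R ∧ a.2 ∈ R
  wf := by
    intro a ha
    rw [Finset.mem_filter] at ha
    obtain ⟨h, h1, h2⟩ := ha
    obtain ⟨hv1, hv2, hne⟩ := D.wf a h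
    exact ⟨Finset.mem_inter.mpr ⟨hv1, h1⟩, Finset.mem_inter.mpr ⟨hv2, h2⟩, hne⟩

/-- The potential `ρ_D(R)` of a set of vertices `R` in `D`: the potential of the
subdigraph of `D` induced by `R`. -/
noncomputable def potentialOn (D : Digraph' V) (R : Finset V) : ℤ :=
  (D.induce R).potential

/-- The digraph obtained from `D` by deleting the arc `a`. -/
def eraseArc (D : Digraph' V) (a : V × V) : Digraph' V where
  verts := D.verts
  arcs := D.arcs.erase a
  wf := fun b hb => D.wf b (Finset.mem_of_mem_erase hb)

/-- The digraph obtained from `D` by deleting the vertex `v`. -/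
def delVert (D : Digraph' V) (v : V) : Digraph' V where
  verts := D.verts.erase v
  arcs := D.arcs.filter fun a => a.1 ≠ v ∧ a.2 ≠ v
  wf := by
    intro a ha
    rw [Finset.mem_filter] at ha
    obtain ⟨h, h1, h2⟩ := ha
    obtain ⟨hv1, hv2, hne⟩ := D.wf a h
    exact ⟨Finset.mem_erase.mpr ⟨h1, hv1⟩, Finset.mem_erase.mpr ⟨h2, hv2⟩, hne⟩

/-- The degree of `v` in `D`: the number of arcs incident to `v`. -/
def degree (D : Digraph' V) (v : V) : ℕ :=
  (D.arcs.filter fun a => a.1 = v ∨ a.2 = v).card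

/-- `D` is a bidirected odd cycle: obtained from an undirected cycle of odd
length (at least 3) by replacing every edge by a digon. -/
def IsBidirectedOddCycle (D : Digraph' V) : Prop :=
  ∃ c : List V, c.Nodup ∧ 3 ≤ c.length ∧ Odd c.length ∧
    D.verts = c.toFinset ∧ D.arcs = symArcs (cyclicArcs c)

/-- `H` is a bidirected odd cycle with one arc removed. -/
def IsBidirOddCycleMinusArc (H : Digraph' V) : Prop :=
  ∃ (C : Digraph' V) (e : V × V), C.IsBidirectedOddCycle ∧ e ∈ C.arcs ∧
    H.verts = C.verts ∧ H.arcs = C.arcs.erase e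

/-- `D` is an odd 3-wheel with center `c`: a vertex `c` joined to a directed
3-cycle `(x, y, z, x)` by three bidirected paths of odd length, pairwise
disjoint except in `c`. -/
def IsOdd3WheelWithCenter (D : Digraph' V) (c : V) : Prop :=
  ∃ (p₁ p₂ p₃ : List V) (x y z : V),
    IsOddBidirPathList p₁ c x ∧ IsOddBidirPathList p₂ c y ∧ IsOddBidirPathList p₃ c z ∧
    p₁.toFinset ∩ p₂.toFinset = {c} ∧ p₁.toFinset ∩ p₃.toFinset = {c} ∧
    p₂.toFinset ∩ p₃.toFinset = {c} ∧
    D.verts = p₁.toFinset ∪ p₂.toFinset ∪ p₃.toFinset ∧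
    D.arcs = pathDigonArcs p₁ ∪ pathDigonArcs p₂ ∪ pathDigonArcs p₃ ∪
      {(x, y), (y, z), (z, x)}

/-- `D` is an odd 3-wheel. -/
def IsOdd3Wheel (D : Digraph' V) : Prop := ∃ c : V, D.IsOdd3WheelWithCenter c

end Digraph'

open Digraph' in
/-- `D` is a purse: obtained from the oriented graph on `{x, y, z, y₁, y₂}` with
arcs `xy, zy, yy₁, yy₂, y₁x, y₁z, y₂x, y₂z` by adding a bidirected path of odd
length between `y₁` and `y₂` whose vertices are disjoint from `{x, y, z}`. -/
def Digraph'.IsPurse {V : Type*} [DecidableEq V] (D : Digraph' V) : Prop :=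
  ∃ (x y z y₁ y₂ : V) (p : List V),
    IsOddBidirPathList p y₁ y₂ ∧
    x ≠ y ∧ x ≠ z ∧ y ≠ z ∧
    x ∉ p ∧ y ∉ p ∧ z ∉ p ∧
    D.verts = {x, y, z} ∪ p.toFinset ∧
    D.arcs = pathDigonArcs p ∪
      {(x, y), (z, y), (y, y₁), (y, y₂), (y₁, x), (y₁, z), (y₂, x), (y₂, z)}

/-!
A purse whose path has `2t` vertices has `n = 2t + 3`, `m = 2(2t - 1) + 8` and `π = t`: every
digon lies on the path, and the path has a perfect matching of digons. Hence `ρ = 3`.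

In a `3`-dicritical digraph every vertex has out-degree at least `2`, since a vertex with at most
one out-neighbour can be coloured last in a `2`-dicolouring of the rest. The vertices `x` and `z`
of a purse have out-degree `1`, so a `3`-dicritical `D` with a spanning purse `H` has at least
two arcs more than `H`, the same vertices and `π(D) ≥ π(H)`; thus `ρ(D) ≤ ρ(H) - 6 = -3`.
-/

namespace List

variable {α : Type*}

theorem mem_zip_tail_iff {l : List α} {a b : α} :
    (a, b) ∈ l.zip l.tail ↔ ∃ i, ∃ h : i + 1 < l.length, l[i] = a ∧ l[i + 1] = b := by
  rw [mem_iff_getElem]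
  constructor
  · rintro ⟨i, hi, he⟩
    simp only [length_zip, length_tail] at hi
    rw [getElem_zip, getElem_tail, Prod.mk.injEq] at he
    exact ⟨i, by omega, he⟩
  · rintro ⟨i, hi, h1, h2⟩
    refine ⟨i, by simp [length_zip]; omega, ?_⟩
    rw [getElem_zip, getElem_tail, h1, h2]

end List

namespace Digraph'

variable {V : Type*} {p : List V}

theorem IsOddBidirPathList.left_mem {a b : V} (h : IsOddBidirPathList p a b) : a ∈ p :=
  List.mem_of_mem_head? h.2.2.1

theorem IsOddBidirPathList.right_mem {a b : V} (h : IsOddBidirPathList p a b) : b ∈ p :=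
  List.mem_of_mem_getLast? h.2.2.2

theorem IsOddBidirPathList.ne {a b : V} (h : IsOddBidirPathList p a b) : a ≠ b := by
  obtain ⟨hnd, heven, hhead, hlast⟩ := h
  match p, hnd, heven, hhead, hlast with
  | [], _, _, hhead, _ => simp at hhead
  | [_], _, heven, _, _ => simp at heven
  | c :: d :: r, hnd, _, hhead, hlast =>
    rintro rfl
    simp only [List.head?_cons, Option.some.injEq] at hhead
    subst hhead
    rw [List.getLast?_cons_cons] at hlast
    exact (List.nodup_cons.mp hnd).1 (List.mem_of_mem_getLast? hlast)

theorem nodup_purseVertices {x y z y₁ y₂ : V} (hp : IsOddBidirPathList p y₁ y₂) (hxy : x ≠ y)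
    (hxz : x ≠ z) (hyz : y ≠ z) (hx : x ∉ p) (hy : y ∉ p) (hz : z ∉ p) :
    [x, y, z, y₁, y₂].Nodup := by
  have h₁ := hp.left_mem
  have h₂ := hp.right_mem
  simp only [List.nodup_cons, List.mem_cons, List.not_mem_nil, or_false, not_or]
  refine ⟨⟨hxy, hxz, ?_, ?_⟩, ⟨hyz, ?_, ?_⟩, ⟨?_, ?_⟩, hp.ne, ?_⟩ <;>
    first | rintro rfl; contradiction | simp

section Matchings

variable {D H : Digraph' V} {M : Finset (V × V)}

theorem IsDigonMatching.subset_arcs (hM : D.IsDigonMatching M) : M ⊆ D.arcs :=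
  fun q hq => (hM.1 q hq).1

theorem IsDigonMatching.mono (hM : H.IsDigonMatching M) (h : H.arcs ⊆ D.arcs) :
    D.IsDigonMatching M :=
  ⟨fun q hq => ⟨h (hM.1 q hq).1, h (hM.1 q hq).2⟩, hM.2⟩

theorem isDigonMatching_empty (D : Digraph' V) : D.IsDigonMatching ∅ := by
  simp [IsDigonMatching]

theorem IsDigonMatching.card_le_piNum (hM : D.IsDigonMatching M) : M.card ≤ D.piNum :=
  le_csSup ⟨D.m, by rintro _ ⟨M', hM', rfl⟩; exact Finset.card_le_card hM'.subset_arcs⟩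
    ⟨M, hM, rfl⟩

theorem piNum_le {k : ℕ} (h : ∀ M, D.IsDigonMatching M → M.card ≤ k) : D.piNum ≤ k :=
  csSup_le ⟨0, ∅, isDigonMatching_empty D, rfl⟩ fun _ ⟨M, hM, hk⟩ => hk ▸ h M hM

theorem piNum_mono (h : H.arcs ⊆ D.arcs) : H.piNum ≤ D.piNum :=
  piNum_le fun _ hM => (hM.mono h).card_le_piNum

theorem potential_le_of_spanning (hA : H.arcs ⊆ D.arcs) (hV : H.verts = D.verts) :
    D.potential ≤ H.potential - 3 * ((D.m : ℤ) - H.m) := by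
  have := piNum_mono hA
  simp only [potential, n, hV]
  omega

end Matchings

variable [DecidableEq V]

theorem mem_of_mem_pathArcs {a : V × V} (h : a ∈ pathArcs p) : a.1 ∈ p ∧ a.2 ∈ p := by
  have := List.of_mem_zip (List.mem_toFinset.mp h)
  exact ⟨this.1, List.mem_of_mem_tail this.2⟩

theorem mem_of_mem_pathDigonArcs {a : V × V} (h : a ∈ pathDigonArcs p) :
    a.1 ∈ p ∧ a.2 ∈ p := by
  rcases Finset.mem_union.mp h with h | h
  · exact mem_of_mem_pathArcs h
  · obtain ⟨b, hb, rfl⟩ := Finset.mem_image.mp h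
    exact (mem_of_mem_pathArcs hb).symm

theorem swap_notMem_pathArcs (hnd : p.Nodup) {a : V × V} (h : a ∈ pathArcs p) :
    a.swap ∉ pathArcs p := by
  intro h'
  rw [pathArcs, List.mem_toFinset, List.mem_zip_tail_iff] at h h'
  obtain ⟨i, hi, hi₁, hi₂⟩ := h
  obtain ⟨j, hj, hj₁, hj₂⟩ := h'
  have : i = j + 1 := hnd.getElem_inj_iff.mp (hi₁.trans hj₂.symm)
  have : i + 1 = j := hnd.getElem_inj_iff.mp (hi₂.trans hj₁.symm)
  omega

theorem card_pathArcs (hnd : p.Nodup) : (pathArcs p).card = p.length - 1 := by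
  have hzip : (p.zip p.tail).Nodup := by
    apply List.Nodup.of_map Prod.snd
    rw [List.map_snd_zip (by simp)]
    exact hnd.tail
  rw [pathArcs, List.toFinset_card_of_nodup hzip, List.length_zip, List.length_tail]
  omega

theorem card_symArcs {s : Finset (V × V)} (h : ∀ a ∈ s, a.swap ∉ s) :
    (symArcs s).card = 2 * s.card := by
  have hdisj : Disjoint s (s.image Prod.swap) := by
    refine Finset.disjoint_left.mpr fun a ha ha' => ?_
    obtain ⟨b, hb, rfl⟩ := Finset.mem_image.mp ha'
    exact h b hb (by simpa using ha)
  rw [symArcs, Finset.card_union_of_disjoint hdisj,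
    Finset.card_image_of_injective _ Prod.swap_injective]
  omega

theorem card_pathDigonArcs (hnd : p.Nodup) :
    (pathDigonArcs p).card = 2 * (p.length - 1) := by
  rw [pathDigonArcs, card_symArcs fun a => swap_notMem_pathArcs hnd, card_pathArcs hnd]

theorem pathArcs_cons_cons (a b : V) (r : List V) :
    pathArcs (a :: b :: r) = insert (a, b) (pathArcs (b :: r)) := by
  simp [pathArcs]
theorem pathArcs_subset_cons (a : V) : ∀ l : List V, pathArcs l ⊆ pathArcs (a :: l)
  | [] => by simp [pathArcs]
  | b :: r => by rw [pathArcs_cons_cons]; exact Finset.subset_insert _ _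

def pairUp {α : Type*} : List α → List (α × α)
  | [] => []
  | [_] => []
  | a :: b :: r => (a, b) :: pairUp r

theorem length_pairUp {α : Type*} : ∀ l : List α, (pairUp l).length = l.length / 2
  | [] | [_] => by simp [pairUp]
  | a :: b :: r => by
    simp only [pairUp, List.length_cons, length_pairUp r]
    omega

theorem mem_pathArcs_of_mem_pairUp : ∀ {l : List V} {q : V × V}, q ∈ pairUp l → q ∈ pathArcs l
  | [], _, h | [_], _, h => by simp [pairUp] at h
  | a :: b :: r, q, h => by
    rcases List.mem_cons.mp h with rfl | h
    · simp [pathArcs_cons_cons]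
    · exact pathArcs_subset_cons a _ (pathArcs_subset_cons b r (mem_pathArcs_of_mem_pairUp h))

theorem mem_of_mem_pairUp {l : List V} {q : V × V} (h : q ∈ pairUp l) : q.1 ∈ l ∧ q.2 ∈ l :=
  mem_of_mem_pathArcs (mem_pathArcs_of_mem_pairUp h)

theorem nodup_pairUp : ∀ {l : List V}, l.Nodup → (pairUp l).Nodup
  | [], _ | [_], _ => List.nodup_nil
  | a :: b :: r, hnd => by
    simp only [List.nodup_cons, List.mem_cons, not_or] at hnd
    exact List.nodup_cons.mpr
      ⟨fun h => hnd.1.2 (mem_of_mem_pairUp h).1, nodup_pairUp hnd.2.2⟩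

theorem pairUp_pairwise_disjoint : ∀ {l : List V}, l.Nodup →
    ∀ q ∈ pairUp l, ∀ q' ∈ pairUp l, q ≠ q' →
      q.1 ≠ q'.1 ∧ q.1 ≠ q'.2 ∧ q.2 ≠ q'.1 ∧ q.2 ≠ q'.2
  | [], _ | [_], _ => by simp [pairUp]
  | a :: b :: r, hnd => by
    simp only [List.nodup_cons, List.mem_cons, not_or] at hnd
    obtain ⟨⟨hab, har⟩, hbr, hr⟩ := hnd
    have ends : ∀ q ∈ pairUp r, a ≠ q.1 ∧ a ≠ q.2 ∧ b ≠ q.1 ∧ b ≠ q.2 := fun q hq => by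
      obtain ⟨h1, h2⟩ := mem_of_mem_pairUp hq
      exact ⟨ne_of_mem_of_not_mem h1 har |>.symm, ne_of_mem_of_not_mem h2 har |>.symm,
        ne_of_mem_of_not_mem h1 hbr |>.symm, ne_of_mem_of_not_mem h2 hbr |>.symm⟩
    simp only [pairUp, List.mem_cons, forall_eq_or_imp]
    refine ⟨⟨fun h => absurd rfl h, fun q hq _ => ends q hq⟩, fun q hq => ⟨fun hne => ?_, ?_⟩⟩
    · obtain ⟨h1, h2, h3, h4⟩ := ends q hq
      exact ⟨h1.symm, h3.symm, h2.symm, h4.symm⟩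
    · exact pairUp_pairwise_disjoint hr q hq

section Matchings

variable {D H : Digraph' V} {M : Finset (V × V)}

theorem IsDigonMatching.two_mul_card_le {U : Finset V} (hM : D.IsDigonMatching M)
    (hU : ∀ q ∈ M, q.1 ∈ U ∧ q.2 ∈ U) : 2 * M.card ≤ U.card := by
  have hcard : (M.biUnion fun q => ({q.1, q.2} : Finset V)).card = 2 * M.card := by
    rw [Finset.card_biUnion, Finset.sum_congr rfl fun q hq =>
      Finset.card_pair (D.wf q (hM.1 q hq).1).2.2, Finset.sum_const, smul_eq_mul, mul_comm]
    intro q hq q' hq' hne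
    obtain ⟨h₁, h₂, h₃, h₄⟩ := hM.2 q hq q' hq' hne
    simp [h₁.symm, h₂.symm, h₃.symm, h₄.symm]
  rw [← hcard]
  refine Finset.card_le_card fun v hv => ?_
  obtain ⟨q, hq, hv⟩ := Finset.mem_biUnion.mp hv
  rcases Finset.mem_insert.mp hv with rfl | hv
  · exact (hU q hq).1
  · exact Finset.mem_singleton.mp hv ▸ (hU q hq).2

theorem isDigonMatching_pairUp {p : List V} (hnd : p.Nodup) (h : pathDigonArcs p ⊆ D.arcs) :
    D.IsDigonMatching (pairUp p).toFinset := by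
  refine ⟨fun q hq => ⟨h ?_, h ?_⟩, fun q hq q' hq' => ?_⟩
  · exact Finset.mem_union_left _ (mem_pathArcs_of_mem_pairUp (List.mem_toFinset.mp hq))
  · exact Finset.mem_union_right _
      (Finset.mem_image.mpr ⟨q, mem_pathArcs_of_mem_pairUp (List.mem_toFinset.mp hq), rfl⟩)
  · exact pairUp_pairwise_disjoint hnd q (List.mem_toFinset.mp hq) q' (List.mem_toFinset.mp hq')

end Matchings

section Dicolourings

variable {D : Digraph' V} {k : ℕ}

def outDegree (D : Digraph' V) (v : V) : ℕ := (D.arcs.filter fun a => a.1 = v).card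

theorem mem_of_mem_cyclicArcs {c : List V} {a : V × V} (h : a ∈ cyclicArcs c) :
    a.1 ∈ c ∧ a.2 ∈ c := by
  have := List.of_mem_zip (List.mem_toFinset.mp h)
  exact ⟨this.1, List.mem_rotate.mp this.2⟩

theorem exists_mem_cyclicArcs {c : List V} {v : V} (hv : v ∈ c) :
    ∃ w ∈ c, (v, w) ∈ cyclicArcs c := by
  obtain ⟨i, hi, rfl⟩ := List.mem_iff_getElem.mp hv
  have hmod : (i + 1) % c.length < c.length := Nat.mod_lt _ (by omega)
  refine ⟨_, List.getElem_mem hmod, List.mem_toFinset.mpr (List.mem_iff_getElem.mpr ?_)⟩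
  refine ⟨i, by simpa using hi, ?_⟩
  rw [List.getElem_zip, List.getElem_rotate]

theorem AcyclicOn.mono {S T : Finset V} (hT : D.AcyclicOn T) (hST : S ⊆ T) : D.AcyclicOn S :=
  fun ⟨c, hnd, hlen, hS, hc⟩ => hT ⟨c, hnd, hlen, fun v hv => hST (hS v hv), hc⟩

theorem acyclicOn_of_subsingleton {S : Finset V} (hS : (S : Set V).Subsingleton) :
    D.AcyclicOn S := by
  rintro ⟨c, hnd, hlen, hc, -⟩
  have h01 := hnd.getElem_inj_iff (i := 0) (j := 1) (hi := by omega) (hj := by omega)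
  exact absurd (h01.mp (hS (hc _ (List.getElem_mem _)) (hc _ (List.getElem_mem _)))) (by simp)

theorem Dicolourable.mono {k' : ℕ} (h : D.Dicolourable k) (hk : k ≤ k') : D.Dicolourable k' := by
  obtain ⟨φ, hφ⟩ := h
  refine ⟨fun v => Fin.castLE hk (φ v), fun i => ?_⟩
  by_cases hi : ∃ j, Fin.castLE hk j = i
  · obtain ⟨j, rfl⟩ := hi
    refine (hφ j).mono fun v hv => ?_
    rw [Finset.mem_filter] at hv ⊢
    exact ⟨hv.1, Fin.castLE_injective hk hv.2⟩
  · refine acyclicOn_of_subsingleton fun u hu => ?_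
    exact absurd ⟨φ u, (Finset.mem_filter.mp hu).2⟩ hi

theorem dicolourable_card_add_one (D : Digraph' V) : D.Dicolourable (D.verts.card + 1) := by
  refine ⟨fun v => if h : v ∈ D.verts then (D.verts.equivFin ⟨v, h⟩).castSucc
    else Fin.last _, fun i => acyclicOn_of_subsingleton fun u hu w hw => ?_⟩
  obtain ⟨hu, hui⟩ := Finset.mem_filter.mp hu
  obtain ⟨hw, hwi⟩ := Finset.mem_filter.mp hw
  beta_reduce at hui hwi
  rw [dif_pos hu] at hui
  rw [dif_pos hw, ← hui, Fin.castSucc_inj, Equiv.apply_eq_iff_eq] at hwi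
  exact congrArg Subtype.val hwi.symm

theorem dichromatic_le_iff : D.dichromatic ≤ k ↔ D.Dicolourable k :=
  ⟨fun h => Dicolourable.mono (Nat.sInf_mem (s := {j | D.Dicolourable j})
    ⟨_, D.dicolourable_card_add_one⟩) h, fun h => Nat.sInf_le h⟩

/-- Give `v` a colour missing on its out-neighbours: a monochromatic cycle through `v` would
leave `v` along an arc into that colour. -/
theorem dicolourable_of_delVert {v : V} (hdel : (D.delVert v).Dicolourable k)
    (hv : D.outDegree v < k) : D.Dicolourable k := by
  obtain ⟨φ, hφ⟩ := hdel
  set outColours := (D.arcs.filter fun a => a.1 = v).image (φ ∘ Prod.snd)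
  obtain ⟨i, -, hi⟩ := Finset.exists_mem_notMem_of_card_lt_card (s := outColours)
    (t := Finset.univ) (by simpa using Finset.card_image_le.trans_lt hv)
  refine ⟨fun w => if w = v then i else φ w, fun j => ?_⟩
  rintro ⟨c, hnd, hlen, hc, hcD⟩
  by_cases hvc : v ∈ c
  · obtain ⟨w, hw, hvw⟩ := exists_mem_cyclicArcs hvc
    have hvwD := hcD hvw
    have hwv : w ≠ v := (D.wf _ hvwD).2.2.symm
    have hvj := (Finset.mem_filter.mp (hc v hvc)).2
    have hwj := (Finset.mem_filter.mp (hc w hw)).2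
    simp only [if_true, hwv, if_false] at hvj hwj
    exact hi (Finset.mem_image.mpr ⟨(v, w), Finset.mem_filter.mpr ⟨hvwD, rfl⟩, hwj.trans hvj.symm⟩)
  · refine hφ j ⟨c, hnd, hlen, fun w hw => ?_, fun a ha => ?_⟩
    · have hwv : w ≠ v := ne_of_mem_of_not_mem hw hvc
      obtain ⟨hwD, hwj⟩ := Finset.mem_filter.mp (hc w hw)
      simp only [hwv, if_false] at hwj
      exact Finset.mem_filter.mpr ⟨Finset.mem_erase.mpr ⟨hwv, hwD⟩, hwj⟩
    · obtain ⟨h₁, h₂⟩ := mem_of_mem_cyclicArcs ha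
      exact Finset.mem_filter.mpr
        ⟨hcD ha, ne_of_mem_of_not_mem h₁ hvc, ne_of_mem_of_not_mem h₂ hvc⟩

theorem Dicritical.le_outDegree (hD : D.Dicritical k) {v : V} (hv : v ∈ D.verts) :
    k - 1 ≤ D.outDegree v := by
  by_contra! hlt
  have hproper : (D.delVert v).IsProperSubdigraph D :=
    ⟨⟨Finset.erase_subset _ _, Finset.filter_subset _ _⟩,
      Or.inl (Finset.erase_ne_self.mpr hv)⟩
  have hcol := dicolourable_of_delVert (dichromatic_le_iff.mp (hD.2 _ hproper)) hlt
  have := dichromatic_le_iff.mpr hcol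
  rw [hD.1] at this
  omega

theorem add_sum_outDegree_le {H : Digraph' V} (h : H.arcs ⊆ D.arcs) (S : Finset V) :
    H.m + ∑ v ∈ S, D.outDegree v ≤ D.m + ∑ v ∈ S, H.outDegree v := by
  have split (G : Digraph' V) : G.m = ∑ v ∈ S, G.outDegree v +
      (G.arcs.filter fun a => a.1 ∉ S).card := by
    rw [m, ← Finset.card_filter_add_card_filter_not (fun a => a.1 ∈ S),
      Finset.card_eq_sum_card_fiberwise (f := Prod.fst) (t := S)
        (s := G.arcs.filter fun a => a.1 ∈ S) fun a ha => (Finset.mem_filter.mp ha).2]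
    simp only [outDegree, Finset.filter_filter]
    congr 1
    refine Finset.sum_congr rfl fun v hv => congrArg Finset.card (Finset.filter_congr ?_)
    rintro a -
    exact ⟨fun h => h.2, fun h => ⟨h ▸ hv, h⟩⟩
  have := Finset.card_le_card (Finset.filter_subset_filter (fun a => a.1 ∉ S) h)
  rw [split H, split D]
  omega

end Dicolourings

theorem outDegree_le_one {D : Digraph' V} {v u : V} (h : ∀ w, (v, w) ∈ D.arcs → w = u) :
    D.outDegree v ≤ 1 := by
  refine (Finset.card_le_card (t := {(v, u)}) fun a ha => ?_).trans (Finset.card_singleton _).le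
  obtain ⟨haD, rfl⟩ := Finset.mem_filter.mp ha
  rw [Finset.mem_singleton, ← h a.2 haD]

section Purse

variable {x y z y₁ y₂ : V} {p : List V}

def purseArcs (x y z y₁ y₂ : V) : Finset (V × V) :=
  {(x, y), (z, y), (y, y₁), (y, y₂), (y₁, x), (y₁, z), (y₂, x), (y₂, z)}

theorem card_purseArcs (h : [x, y, z, y₁, y₂].Nodup) : (purseArcs x y z y₁ y₂).card = 8 := by
  simp only [List.nodup_cons, List.mem_cons, List.not_mem_nil, or_false, not_or] at h
  obtain ⟨⟨hxy, hxz, hx₁, hx₂⟩, ⟨hyz, hy₁, hy₂⟩, ⟨hz₁, hz₂⟩, h₁₂, -⟩ := h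
  simp [purseArcs, Finset.card_insert_of_notMem, *, Ne.symm hxy]

theorem swap_notMem_purseArcs (h : [x, y, z, y₁, y₂].Nodup) {a : V × V}
    (ha : a ∈ purseArcs x y z y₁ y₂) : a.swap ∉ purseArcs x y z y₁ y₂ := by
  simp only [List.nodup_cons, List.mem_cons, List.not_mem_nil, or_false, not_or] at h
  obtain ⟨⟨hxy, hxz, hx₁, hx₂⟩, ⟨hyz, hy₁, hy₂⟩, ⟨hz₁, hz₂⟩, h₁₂, -⟩ := h
  simp only [purseArcs, Finset.mem_insert, Finset.mem_singleton] at ha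
  rcases ha with rfl | rfl | rfl | rfl | rfl | rfl | rfl | rfl <;>
    simp [purseArcs, *, Ne.symm hxy, Ne.symm hxz, Ne.symm hyz, Ne.symm hx₁, Ne.symm hx₂,
      Ne.symm hy₁, Ne.symm hy₂, Ne.symm hz₁, Ne.symm hz₂, Ne.symm h₁₂]

theorem disjoint_pathDigonArcs_purseArcs (hx : x ∉ p) (hy : y ∉ p) (hz : z ∉ p) :
    Disjoint (pathDigonArcs p) (purseArcs x y z y₁ y₂) := by
  refine Finset.disjoint_right.mpr fun a ha ha' => ?_
  have := mem_of_mem_pathDigonArcs ha'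
  simp only [purseArcs, Finset.mem_insert, Finset.mem_singleton] at ha
  rcases ha with rfl | rfl | rfl | rfl | rfl | rfl | rfl | rfl <;> simp_all

theorem eq_of_mem_purse (hxy : x ≠ y) (hxz : x ≠ z) (hx : x ∉ p) (h₁ : y₁ ∈ p) (h₂ : y₂ ∈ p)
    {w : V} (h : (x, w) ∈ pathDigonArcs p ∪ purseArcs x y z y₁ y₂) : w = y := by
  rcases Finset.mem_union.mp h with h | h
  · exact absurd (mem_of_mem_pathDigonArcs h).1 hx
  · simpa [purseArcs, hxy, hxz, (ne_of_mem_of_not_mem h₁ hx).symm,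
      (ne_of_mem_of_not_mem h₂ hx).symm] using h

theorem purseArcs_comm : purseArcs x y z y₁ y₂ = purseArcs z y x y₁ y₂ := by
  ext
  simp only [purseArcs, Finset.mem_insert, Finset.mem_singleton]
  tauto

theorem card_purseVerts (hnd : p.Nodup) (hxy : x ≠ y) (hxz : x ≠ z) (hyz : y ≠ z)
    (hx : x ∉ p) (hy : y ∉ p) (hz : z ∉ p) : ({x, y, z} ∪ p.toFinset).card = p.length + 3 := by
  have hdisj : Disjoint ({x, y, z} : Finset V) p.toFinset := by
    simp [hx, hy, hz]
  rw [Finset.card_union_of_disjoint hdisj, List.toFinset_card_of_nodup hnd,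
    Finset.card_insert_of_notMem (by simp [hxy, hxz]),
    Finset.card_insert_of_notMem (by simp [hyz]), Finset.card_singleton]
  omega

theorem mem_of_digon_purse (hd : [x, y, z, y₁, y₂].Nodup) {u v : V}
    (huv : (u, v) ∈ pathDigonArcs p ∪ purseArcs x y z y₁ y₂)
    (hvu : (v, u) ∈ pathDigonArcs p ∪ purseArcs x y z y₁ y₂) : u ∈ p ∧ v ∈ p := by
  rcases Finset.mem_union.mp huv with huv | huv
  · exact mem_of_mem_pathDigonArcs huv
  rcases Finset.mem_union.mp hvu with hvu | hvu
  · exact (mem_of_mem_pathDigonArcs hvu).symm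
  · exact absurd hvu (swap_notMem_purseArcs hd huv)

theorem piNum_eq_of_purse {H : Digraph' V} (hnd : p.Nodup) (hd : [x, y, z, y₁, y₂].Nodup)
    (hA : H.arcs = pathDigonArcs p ∪ purseArcs x y z y₁ y₂) : H.piNum = p.length / 2 := by
  refine le_antisymm (piNum_le fun M hM => ?_) ?_
  · have := hM.two_mul_card_le (U := p.toFinset) fun q hq => by
      simpa using mem_of_digon_purse hd (hA ▸ (hM.1 q hq).1) (hA ▸ (hM.1 q hq).2)
    rw [List.toFinset_card_of_nodup hnd] at this
    omega
  · have hM := isDigonMatching_pairUp (D := H) hnd (hA ▸ Finset.subset_union_left)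
    rw [← length_pairUp, ← List.toFinset_card_of_nodup (nodup_pairUp hnd)]
    exact hM.card_le_piNum

end Purse

theorem IsPurse.potential_eq {H : Digraph' V} (hH : H.IsPurse) : H.potential = 3 := by
  obtain ⟨x, y, z, y₁, y₂, p, hp, hxy, hxz, hyz, hx, hy, hz, hV, hA⟩ := hH
  change H.arcs = pathDigonArcs p ∪ purseArcs x y z y₁ y₂ at hA
  have hd := nodup_purseVertices hp hxy hxz hyz hx hy hz
  have hn : H.n = p.length + 3 := by rw [n, hV, card_purseVerts hp.1 hxy hxz hyz hx hy hz]
  have hm : H.m = 2 * (p.length - 1) + 8 := by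
    rw [m, hA, Finset.card_union_of_disjoint (disjoint_pathDigonArcs_purseArcs hx hy hz),
      card_pathDigonArcs hp.1, card_purseArcs hd]
  have hπ := piNum_eq_of_purse (H := H) hp.1 hd hA
  have := List.length_pos_of_mem hp.left_mem
  obtain ⟨t, ht⟩ := hp.2.1
  simp only [potential, hn, hm, hπ]
  omega

theorem IsPurse.exists_outDegree_le_one {H : Digraph' V} (hH : H.IsPurse) :
    ∃ x ∈ H.verts, ∃ z ∈ H.verts, x ≠ z ∧ H.outDegree x ≤ 1 ∧ H.outDegree z ≤ 1 := by
  obtain ⟨x, y, z, y₁, y₂, p, hp, hxy, hxz, hyz, hx, hy, hz, hV, hA⟩ := hH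
  change H.arcs = pathDigonArcs p ∪ purseArcs x y z y₁ y₂ at hA
  refine ⟨x, by simp [hV], z, by simp [hV], hxz, outDegree_le_one (u := y) fun w hw => ?_,
    outDegree_le_one (u := y) fun w hw => ?_⟩
  · exact eq_of_mem_purse hxy hxz hx hp.left_mem hp.right_mem (hA ▸ hw)
  · rw [hA, purseArcs_comm] at hw
    exact eq_of_mem_purse hyz.symm hxz.symm hz hp.left_mem hp.right_mem hw

end Digraph'

open Digraph' in
/-- (i) Every purse has potential 3. (ii) Every 3-dicritical
digraph having a spanning purse as a subdigraph has potential at most `-3`. -/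
theorem purse_potential {V : Type*} [DecidableEq V] :
    (∀ H : Digraph' V, H.IsPurse → H.potential = 3) ∧
    (∀ D : Digraph' V, Digraph'.Dicritical 3 D →
      (∃ H : Digraph' V, H.IsSubdigraph D ∧ H.IsPurse ∧ H.verts = D.verts) →
      D.potential ≤ -3) := by
  refine ⟨fun H hH => hH.potential_eq, ?_⟩
  rintro D hD ⟨H, hHD, hH, hV⟩
  obtain ⟨x, hx, z, hz, hxz, hHx, hHz⟩ := hH.exists_outDegree_le_one
  have hDx := hD.le_outDegree (hV ▸ hx)
  have hDz := hD.le_outDegree (hV ▸ hz)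
  have hm := add_sum_outDegree_le hHD.2 {x, z}
  rw [Finset.sum_pair hxz, Finset.sum_pair hxz] at hm
  have hρ := potential_le_of_spanning hHD.2 hV
  rw [hH.potential_eq] at hρ
  omega
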